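/- Let Z be a coalescent-walk process over [n] and σ = CP(Z) the permutation defined by σ(i) ≤ σ(j) ⟺ i ≤_Z j. Then for any subset I = {i_1 < ... < i_k} of [n] and permutation π ∈ S_k, if for all 1 ≤ ℓ < s ≤ k one has Z^{(i_ℓ)}_{i_s} ≥ 0 ⟺ π(s) < π(ℓ), then the pattern of σ induced by I is π. -/

import Mathlib

/-- The order relation associated with a coalescent-walk process Z over [n]
(indexed by `Fin n`): i ≤_Z j iff (i < j and Z i j < 0) or (j < i and Z j i ≥ 0)
or i = j. -/
def coalOrder {n : ℕ} (Z : Fin n → Fin n → ℤ) (i j : Fin n) : Prop :=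
  (i < j ∧ Z i j < 0) ∨ (j < i ∧ 0 ≤ Z j i) ∨ i = j

section coalOrder

variable {n : ℕ} (Z : Fin n → Fin n → ℤ) {i j : Fin n}

theorem coalOrder_iff_of_lt (h : i < j) : coalOrder Z i j ↔ Z i j < 0 := by
  refine ⟨?_, fun hZ => Or.inl ⟨h, hZ⟩⟩
  rintro (⟨-, hZ⟩ | ⟨hji, -⟩ | rfl)
  · exact hZ
  · exact absurd hji h.asymm
  · exact absurd h (lt_irrefl _)

theorem coalOrder_iff_of_gt (h : j < i) : coalOrder Z i j ↔ 0 ≤ Z j i := by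
  refine ⟨?_, fun hZ => Or.inr (Or.inl ⟨h, hZ⟩)⟩
  rintro (⟨hij, -⟩ | ⟨-, hZ⟩ | rfl)
  · exact absurd hij h.asymm
  · exact hZ
  · exact absurd h (lt_irrefl _)

end coalOrder

theorem pattern_from_coalescent_general
    {n : ℕ} (Z : Fin n → Fin n → ℤ)
    (σ : Equiv.Perm (Fin n))
    (hσ : ∀ i j : Fin n, σ i ≤ σ j ↔ coalOrder Z i j)
    {k : ℕ} (I : Fin k → Fin n) (hI : StrictMono I)
    (π : Equiv.Perm (Fin k))
    (hpat : ∀ ℓ s : Fin k, ℓ < s → (0 ≤ Z (I ℓ) (I s) ↔ π s < π ℓ)) :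
    ∀ ℓ s : Fin k, σ (I ℓ) ≤ σ (I s) ↔ π ℓ ≤ π s := by
  intro ℓ s
  rcases lt_trichotomy ℓ s with h | rfl | h
  · rw [hσ, coalOrder_iff_of_lt Z (hI h), ← not_le, hpat ℓ s h, not_lt]
  · exact iff_of_true le_rfl le_rfl
  · rw [hσ, coalOrder_iff_of_gt Z (hI h), hpat s ℓ h,
      (π.injective.ne h.ne').le_iff_lt]

/-- Pattern extraction from the permutation CP(Z) of a coalescent-walk process Z over
[n]: if I = {i₁ < … < i_k} and for all ℓ < s we have Z^{(i_ℓ)}_{i_s} ≥ 0 ⟺ π(s) < π(ℓ),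
then the pattern of σ = CP(Z) induced by I is π, i.e. σ∘I is order-isomorphic to π. -/
theorem pattern_from_coalescent
    {n : ℕ} (Z : Fin n → Fin n → ℤ)
    (hstart : ∀ t, Z t t = 0)
    (hmono : ∀ t t' k : Fin n, max t t' ≤ k → Z t' k ≤ Z t k →
      ∀ k' : Fin n, k ≤ k' → Z t' k' ≤ Z t k')
    (σ : Equiv.Perm (Fin n))
    (hσ : ∀ i j : Fin n, σ i ≤ σ j ↔ coalOrder Z i j)
    {k : ℕ} (I : Fin k → Fin n) (hI : StrictMono I)
    (π : Equiv.Perm (Fin k))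
    (hpat : ∀ ℓ s : Fin k, ℓ < s → (0 ≤ Z (I ℓ) (I s) ↔ π s < π ℓ)) :
    ∀ ℓ s : Fin k, σ (I ℓ) ≤ σ (I s) ↔ π ℓ ≤ π s :=
  pattern_from_coalescent_general Z σ hσ I hI π hpat
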